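/- Let H be a 3-uniform linear hypergraph containing no Berge cycle of length 5 and let {a,b,c} be a hyperedge of H. Then |N₁(a) ∩ N₁(b) ∩ N₁(c)| ≤ 1, where N₁(x) is the set of vertices sharing a hyperedge with x. -/

import Mathlib

/-!
Let `x ≠ y` be common neighbours of the vertices of `e = {a, b, c}`, and join each of `x, y` to
each vertex of `e` by an edge. By linearity at most one edge passes through both `x` and `y`, so
for some vertex `r` of `e` the edges `rx` and `ry` differ. With the other two vertices `p, q` of
`e` they close the Berge pentagon `x – p – q – y – r – x`, which passes through `e` from `p` to `q`.
-/

open Finset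

/-- Degree of a vertex: number of hyperedges containing it. -/
def hyperDeg {V : Type*} [DecidableEq V] (H : Finset (Finset V)) (v : V) : ℕ :=
  (H.filter fun e => v ∈ e).card

/-- First neighborhood: vertices other than `v` sharing a hyperedge with `v`. -/
def N1 {V : Type*} [DecidableEq V] (H : Finset (Finset V)) (v : V) : Finset V :=
  ((H.filter fun e => v ∈ e).biUnion id).erase v

/-- Second neighborhood: vertices outside `N1 H v ∪ {v}` lying in a hyperedge
that meets `N1 H v`. -/
def N2 {V : Type*} [DecidableEq V] (H : Finset (Finset V)) (v : V) : Finset V :=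
  ((H.filter fun e => (e ∩ N1 H v).Nonempty).biUnion id) \ insert v (N1 H v)

/-- A hypergraph is linear if any two distinct hyperedges share at most one vertex. -/
def IsLinear {V : Type*} [DecidableEq V] (H : Finset (Finset V)) : Prop :=
  ∀ e ∈ H, ∀ f ∈ H, e ≠ f → (e ∩ f).card ≤ 1

/-- A Berge cycle of length `k`: `k` distinct vertices and `k` distinct hyperedges,
with `v i, v (i+1) ∈ h i` cyclically. -/
def HasBergeCycle {V : Type*} (H : Finset (Finset V)) (k : ℕ) : Prop :=
  ∃ (v : ZMod k → V) (h : ZMod k → Finset V),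
    Function.Injective v ∧ Function.Injective h ∧
    ∀ i, h i ∈ H ∧ v i ∈ h i ∧ v (i + 1) ∈ h i

theorem mem_N1 {V : Type*} [DecidableEq V] {H : Finset (Finset V)} {v x : V} :
    x ∈ N1 H v ↔ x ≠ v ∧ ∃ e ∈ H, v ∈ e ∧ x ∈ e := by
  simp [N1, and_assoc]

theorem injective_vecCons_five_of_nodup {α : Type*} {a₀ a₁ a₂ a₃ a₄ : α}
    (ha : [a₀, a₁, a₂, a₃, a₄].Nodup) :
    Function.Injective (![a₀, a₁, a₂, a₃, a₄] : ZMod 5 → α) := by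
  simp only [List.nodup_cons, List.mem_cons, List.not_mem_nil] at ha
  intro i j hij
  fin_cases i <;> fin_cases j <;> simp_all [eq_comm]

theorem hasBergeCycle_five_of_nodup {V : Type*} {H : Finset (Finset V)}
    {v₀ v₁ v₂ v₃ v₄ : V} {h₀ h₁ h₂ h₃ h₄ : Finset V}
    (hv : [v₀, v₁, v₂, v₃, v₄].Nodup) (hh : [h₀, h₁, h₂, h₃, h₄].Nodup)
    (hH : ∀ h ∈ [h₀, h₁, h₂, h₃, h₄], h ∈ H)
    (h₀v : v₀ ∈ h₀ ∧ v₁ ∈ h₀) (h₁v : v₁ ∈ h₁ ∧ v₂ ∈ h₁) (h₂v : v₂ ∈ h₂ ∧ v₃ ∈ h₂)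
    (h₃v : v₃ ∈ h₃ ∧ v₄ ∈ h₃) (h₄v : v₄ ∈ h₄ ∧ v₀ ∈ h₄) :
    HasBergeCycle H 5 := by
  refine ⟨_, _, injective_vecCons_five_of_nodup hv, injective_vecCons_five_of_nodup hh,
    fun i => ?_⟩
  simp only [List.mem_cons, List.not_mem_nil, forall_eq_or_imp] at hH
  obtain ⟨H₀, H₁, H₂, H₃, H₄, -⟩ := hH
  fin_cases i
  exacts [⟨H₀, h₀v⟩, ⟨H₁, h₁v⟩, ⟨H₂, h₂v⟩, ⟨H₃, h₃v⟩, ⟨H₄, h₄v⟩]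

namespace IsLinear

variable {V : Type*} [DecidableEq V] {H : Finset (Finset V)}

theorem eq_of_mem_of_mem (hH : IsLinear H) {f g : Finset V} (hf : f ∈ H) (hg : g ∈ H)
    (hfg : f ≠ g) {s t : V} (hsf : s ∈ f) (hsg : s ∈ g) (htf : t ∈ f) (htg : t ∈ g) :
    s = t := by
  by_contra hst
  have hsub : ({s, t} : Finset V) ⊆ f ∩ g := by
    simp [insert_subset_iff, hsf, htf, hsg, htg]
  have := (card_le_card hsub).trans (hH f hf g hg hfg)
  rw [card_pair hst] at this
  omega

/-- The Berge pentagon `x f₁ p e q f₂ y f₃ r f₄ x`. Its edges other than `f₃, f₄` are pairwise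
distinct by linearity, since they meet `e` in different vertices (or are `e`). -/
theorem hasBergeCycle_five (hH : IsLinear H) {e f₁ f₂ f₃ f₄ : Finset V} {p q r x y : V}
    (he : e ∈ H) (hf₁ : f₁ ∈ H) (hf₂ : f₂ ∈ H) (hf₃ : f₃ ∈ H) (hf₄ : f₄ ∈ H)
    (hp : p ∈ e) (hq : q ∈ e) (hr : r ∈ e) (hpq : p ≠ q) (hpr : p ≠ r) (hqr : q ≠ r)
    (hx : x ∉ e) (hy : y ∉ e) (hxy : x ≠ y)
    (h₁ : x ∈ f₁ ∧ p ∈ f₁) (h₂ : q ∈ f₂ ∧ y ∈ f₂) (h₃ : y ∈ f₃ ∧ r ∈ f₃)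
    (h₄ : r ∈ f₄ ∧ x ∈ f₄) (h₃₄ : f₃ ≠ f₄) :
    HasBergeCycle H 5 := by
  have apart {f g : Finset V} (hf : f ∈ H) (hfe : f ≠ e) {s t : V} (hst : s ≠ t)
      (hsf : s ∈ f) (htg : t ∈ g) (hs : s ∈ e) (ht : t ∈ e) : f ≠ g := by
    rintro rfl
    exact hst (hH.eq_of_mem_of_mem hf he hfe hsf hs htg ht)
  have hf₁e : f₁ ≠ e := ne_of_mem_of_not_mem' h₁.1 hx
  have hf₂e : f₂ ≠ e := ne_of_mem_of_not_mem' h₂.2 hy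
  have hf₃e : f₃ ≠ e := ne_of_mem_of_not_mem' h₃.1 hy
  have hf₄e : f₄ ≠ e := ne_of_mem_of_not_mem' h₄.2 hx
  have hv : [x, p, q, y, r].Nodup := by
    have := ne_of_mem_of_not_mem hp hx
    have := ne_of_mem_of_not_mem hq hx
    have := ne_of_mem_of_not_mem hr hx
    have := ne_of_mem_of_not_mem hp hy
    have := ne_of_mem_of_not_mem hq hy
    have := ne_of_mem_of_not_mem hr hy
    simp only [List.nodup_cons, List.mem_cons, List.not_mem_nil]
    grind
  have hh : [f₁, e, f₂, f₃, f₄].Nodup := by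
    have := apart hf₁ hf₁e hpq h₁.2 h₂.1 hp hq
    have := apart hf₁ hf₁e hpr h₁.2 h₃.2 hp hr
    have := apart hf₁ hf₁e hpr h₁.2 h₄.1 hp hr
    have := apart hf₂ hf₂e hqr h₂.1 h₃.2 hq hr
    have := apart hf₂ hf₂e hqr h₂.1 h₄.1 hq hr
    simp only [List.nodup_cons, List.mem_cons, List.not_mem_nil]
    grind
  exact hasBergeCycle_five_of_nodup hv hh (by simp [*]) h₁ ⟨hp, hq⟩ h₂ h₃ h₄

theorem hasBergeCycle_five_of_mem_N1 (hH : IsLinear H) {a b c x y : V}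
    (he : ({a, b, c} : Finset V) ∈ H) (hab : a ≠ b) (hac : a ≠ c) (hbc : b ≠ c) (hxy : x ≠ y)
    (hx : x ∈ N1 H a ∩ N1 H b ∩ N1 H c) (hy : y ∈ N1 H a ∩ N1 H b ∩ N1 H c) :
    HasBergeCycle H 5 := by
  simp only [mem_inter, mem_N1] at hx hy
  obtain ⟨⟨⟨hxa, fax, hfax, hax, hxax⟩, hxb, fbx, hfbx, hbx, hxbx⟩, hxc, fcx, hfcx, hcx, hxcx⟩ := hx
  obtain ⟨⟨⟨hya, fay, hfay, hay, hyay⟩, hyb, fby, hfby, hby, hyby⟩, hyc, fcy, hfcy, hcy, hycy⟩ := hy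
  have hxe : x ∉ ({a, b, c} : Finset V) := by simp [hxa, hxb, hxc]
  have hye : y ∉ ({a, b, c} : Finset V) := by simp [hya, hyb, hyc]
  by_cases hc : fcy = fcx
  · -- otherwise `fax = fcx` would be the edge through `x, y`, and it would contain `a, c`
    have ha : fay ≠ fax := by
      intro ha
      have hfxy : fax = fcx := by
        by_contra hne
        exact hxy (hH.eq_of_mem_of_mem hfax hfcx hne hxax hxcx (ha ▸ hyay) (hc ▸ hycy))
      exact hac (hH.eq_of_mem_of_mem hfax he (ne_of_mem_of_not_mem' hxax hxe) hax (by simp)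
        (hfxy ▸ hcx) (by simp))
    exact hH.hasBergeCycle_five he hfbx hfcy hfay hfax (by simp) (by simp) (by simp) hbc
      hab.symm hac.symm hxe hye hxy ⟨hxbx, hbx⟩ ⟨hcy, hycy⟩ ⟨hyay, hay⟩ ⟨hax, hxax⟩ ha
  · exact hH.hasBergeCycle_five he hfax hfby hfcy hfcx (by simp) (by simp) (by simp) hab hac
      hbc hxe hye hxy ⟨hxax, hax⟩ ⟨hby, hyby⟩ ⟨hycy, hcy⟩ ⟨hcx, hxcx⟩ hc

end IsLinear

theorem stmt_8_general {V : Type*} [DecidableEq V]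
    (H : Finset (Finset V))
    (hUnif : ∀ e ∈ H, e.card = 3)
    (hLin : IsLinear H)
    (hNoC5 : ¬ HasBergeCycle H 5)
    (a b c : V) (habc : ({a, b, c} : Finset V) ∈ H) :
    (N1 H a ∩ N1 H b ∩ N1 H c).card ≤ 1 := by
  obtain ⟨hab, hac, hbc⟩ := card_triple_eq_three_iff.mp (hUnif _ habc)
  by_contra! htwo
  obtain ⟨x, hx, y, hy, hxy⟩ := one_lt_card.mp htwo
  exact hNoC5 (hLin.hasBergeCycle_five_of_mem_N1 habc hab hac hbc hxy hx hy)

theorem stmt_8 {V : Type*} [Fintype V] [DecidableEq V]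
    (H : Finset (Finset V))
    (hUnif : ∀ e ∈ H, e.card = 3)
    (hLin : IsLinear H)
    (hNoC5 : ¬ HasBergeCycle H 5)
    (a b c : V) (habc : ({a, b, c} : Finset V) ∈ H) :
    (N1 H a ∩ N1 H b ∩ N1 H c).card ≤ 1 :=
  stmt_8_general H hUnif hLin hNoC5 a b c habc
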